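/- arXiv:2008.00822 — 2 statements merged into one kernel-verified Lean document; each statement's English description precedes it below -/
import Mathlib

section
/- (Theorem 2: the real projective geodesic equation.) Let g be a pointwise-hermitian, positive-definite C¹ metric on ℂⁿ with g = g^R + i·g^I (so g^R is symmetric positive definite, hence invertible), and let z = x + it : ℝ → ℂⁿ be a C² curve with L(σ) > 0 satisfying the complex geodesic equation. Define the link tensor ε^η_γ = Σ_ν g^I_{νγ̄}·((g^R)⁻¹)_{νη} and the symbols Υ^{(1,1)}_{γαβ} = Φ^{γ++}_{αβ} + Σ_η ε^η_γ·(Φ^{η+-}_{αβ} + ½·∂^t_η g^R_{αβ̄}), Υ^{(1,0)}_{γαβ} = F^x_{αγβ} + ∂^t_α g^R_{βγ̄} + Σ_η ε^η_γ·(∂^x_β g^R_{αη̄} − F^t_{βηα}), and Υ^{(0,0)}_{γαβ} = Φ^{γ--}_{αβ} − ½·∂^x_γ g^R_{αβ̄} − Σ_η ε^η_γ·Φ^{η-+}_{αβ}. Then for every index γ and every σ: Σ_μ (g^R_{μγ̄} + Σ_η ε^η_γ·g^I_{μη̄}) D²x^μ = Σ_{α,β} Υ^{(1,1)}_{γαβ}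 Dx^α Dx^β − Σ_{α,β} Υ^{(1,0)}_{γαβ} Dt^α Dx^β − Σ_{α,β} Υ^{(0,0)}_{γαβ} Dt^α Dt^β, all coefficient functions evaluated at z(σ). -/
open Complex
open scoped ComplexOrder

noncomputable section

/-- The `α`-th standard basis vector of `ℂⁿ`. -/
def eV (n : ℕ) (α : Fin n) : Fin n → ℂ := fun i => if i = α then 1 else 0

/-- `∂^x_α`: partial derivative of `f : ℂⁿ → ℂ` at `z` in the real direction `x^α`. -/
def dX {n : ℕ} (α : Fin n) (f : (Fin n → ℂ) → ℂ) (z : Fin n → ℂ) : ℂ :=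
  deriv (fun s : ℝ => f (fun i => z i + (s : ℂ) * eV n α i)) 0

/-- `∂^t_α`: partial derivative of `f : ℂⁿ → ℂ` at `z` in the imaginary direction `t^α`. -/
def dT {n : ℕ} (α : Fin n) (f : (Fin n → ℂ) → ℂ) (z : Fin n → ℂ) : ℂ :=
  deriv (fun s : ℝ => f (fun i => z i + (s : ℂ) * Complex.I * eV n α i)) 0

/-- Wirtinger derivative `∂_α = ½(∂^x_α − i ∂^t_α)`. -/
def dW {n : ℕ} (α : Fin n) (f : (Fin n → ℂ) → ℂ) (z : Fin n → ℂ) : ℂ :=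
  (dX α f z - Complex.I * dT α f z) / 2

/-- Conjugate Wirtinger derivative `∂_ᾱ = ½(∂^x_α + i ∂^t_α)`. -/
def dWbar {n : ℕ} (α : Fin n) (f : (Fin n → ℂ) → ℂ) (z : Fin n → ℂ) : ℂ :=
  (dX α f z + Complex.I * dT α f z) / 2

/-- The `(i,j)` entry of the metric, as a `ℂ`-valued function `g_{i j̄}`. -/
def gF {n : ℕ} (g : (Fin n → ℂ) → Matrix (Fin n) (Fin n) ℂ) (i j : Fin n) :
    (Fin n → ℂ) → ℂ := fun z => g z i j

/-- The real part `g^R_{i j̄}` of the metric entry, coerced into `ℂ`. -/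
def gR {n : ℕ} (g : (Fin n → ℂ) → Matrix (Fin n) (Fin n) ℂ) (i j : Fin n) :
    (Fin n → ℂ) → ℂ := fun z => ((g z i j).re : ℂ)

/-- The imaginary part `g^I_{i j̄}` of the metric entry, coerced into `ℂ`. -/
def gI {n : ℕ} (g : (Fin n → ℂ) → Matrix (Fin n) (Fin n) ℂ) (i j : Fin n) :
    (Fin n → ℂ) → ℂ := fun z => ((g z i j).im : ℂ)

/-- `g` is pointwise hermitian: `g_{αβ̄} = conj (g_{βᾱ})`. -/
def IsHermitianMetric {n : ℕ} (g : (Fin n → ℂ) → Matrix (Fin n) (Fin n) ℂ) : Prop :=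
  ∀ z i j, g z i j = (starRingEnd ℂ) (g z j i)

/-- `g` is continuously differentiable (entrywise, as a map over `ℝ`). -/
def MetricC1 {n : ℕ} (g : (Fin n → ℂ) → Matrix (Fin n) (Fin n) ℂ) : Prop :=
  ∀ i j, ContDiff ℝ 1 (gF g i j)

/-- Primary field `Φ^{γ++}_{αβ}`. -/
def PhiPP {n : ℕ} (g : (Fin n → ℂ) → Matrix (Fin n) (Fin n) ℂ) (γ α β : Fin n)
    (z : Fin n → ℂ) : ℂ :=
  (dX γ (gR g α β) z - dX α (gR g β γ) z - dX β (gR g α γ) z) / 2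

/-- Primary field `Φ^{γ+-}_{αβ}`. -/
def PhiPM {n : ℕ} (g : (Fin n → ℂ) → Matrix (Fin n) (Fin n) ℂ) (γ α β : Fin n)
    (z : Fin n → ℂ) : ℂ :=
  (dX γ (gI g α β) z - dX α (gI g β γ) z - dX β (gI g α γ) z) / 2

/-- Primary field `Φ^{γ-+}_{αβ}`. -/
def PhiMP {n : ℕ} (g : (Fin n → ℂ) → Matrix (Fin n) (Fin n) ℂ) (γ α β : Fin n)
    (z : Fin n → ℂ) : ℂ :=
  (dT γ (gR g α β) z - dT α (gR g β γ) z - dT β (gR g α γ) z) / 2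

/-- Primary field `Φ^{γ--}_{αβ}`. -/
def PhiMM {n : ℕ} (g : (Fin n → ℂ) → Matrix (Fin n) (Fin n) ℂ) (γ α β : Fin n)
    (z : Fin n → ℂ) : ℂ :=
  (dT γ (gI g α β) z - dT α (gI g β γ) z - dT β (gI g α γ) z) / 2

/-- Secondary field `F^x_{αγβ}`. -/
def Fx {n : ℕ} (g : (Fin n → ℂ) → Matrix (Fin n) (Fin n) ℂ) (α γ β : Fin n)
    (z : Fin n → ℂ) : ℂ :=
  dX γ (gI g α β) z - dX β (gI g α γ) z

/-- Secondary field `F^t_{αγβ}`. -/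
def Ft {n : ℕ} (g : (Fin n → ℂ) → Matrix (Fin n) (Fin n) ℂ) (α γ β : Fin n)
    (z : Fin n → ℂ) : ℂ :=
  dT γ (gI g α β) z - dT β (gI g α γ) z

/-- The Lagrangian `L(z,v) = sqrt(Re Σ g_{αβ̄}(z) v^α conj(v^β))`. -/
def Lag {n : ℕ} (g : (Fin n → ℂ) → Matrix (Fin n) (Fin n) ℂ) (z v : Fin n → ℂ) : ℝ :=
  Real.sqrt (∑ α, ∑ β, g z α β * v α * (starRingEnd ℂ) (v β)).re

/-- Wirtinger derivative with respect to `conj(v^γ)` of a real-valued function on `ℂⁿ`: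
`½(∂/∂(Re v^γ) + i·∂/∂(Im v^γ))`. -/
def dWbarR {n : ℕ} (γ : Fin n) (f : (Fin n → ℂ) → ℝ) (v : Fin n → ℂ) : ℂ :=
  ((deriv (fun s : ℝ => f (fun i => v i + (s : ℂ) * eV n γ i)) 0 : ℝ) +
    Complex.I *
      (deriv (fun s : ℝ => f (fun i => v i + (s : ℂ) * Complex.I * eV n γ i)) 0 : ℝ)) / 2

/-- The Lagrangian speed `L(σ)` of a curve `z : ℝ → ℂⁿ`. -/
def curveL {n : ℕ} (g : (Fin n → ℂ) → Matrix (Fin n) (Fin n) ℂ) (z : ℝ → Fin n → ℂ)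
    (σ : ℝ) : ℝ :=
  Lag g (z σ) (fun α => deriv (fun τ => z τ α) σ)

/-- `Dz^α = (1/L)·dz^α/dσ`. -/
def Dz {n : ℕ} (g : (Fin n → ℂ) → Matrix (Fin n) (Fin n) ℂ) (z : ℝ → Fin n → ℂ)
    (α : Fin n) (σ : ℝ) : ℂ :=
  (curveL g z σ : ℂ)⁻¹ * deriv (fun τ => z τ α) σ

/-- `D²z^α = (1/L)·d/dσ((1/L)·dz^α/dσ)`. -/
def D2z {n : ℕ} (g : (Fin n → ℂ) → Matrix (Fin n) (Fin n) ℂ) (z : ℝ → Fin n → ℂ)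
    (α : Fin n) (σ : ℝ) : ℂ :=
  (curveL g z σ : ℂ)⁻¹ *
    deriv (fun τ => (curveL g z τ : ℂ)⁻¹ * deriv (fun s => z s α) τ) σ

/-- `Dx^α = (1/L)·dx^α/dσ`. -/
def Dx {n : ℕ} (g : (Fin n → ℂ) → Matrix (Fin n) (Fin n) ℂ) (z : ℝ → Fin n → ℂ)
    (α : Fin n) (σ : ℝ) : ℝ :=
  (curveL g z σ)⁻¹ * deriv (fun τ => (z τ α).re) σ

/-- `Dt^α = (1/L)·dt^α/dσ`. -/
def Dt {n : ℕ} (g : (Fin n → ℂ) → Matrix (Fin n) (Fin n) ℂ) (z : ℝ → Fin n → ℂ)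
    (α : Fin n) (σ : ℝ) : ℝ :=
  (curveL g z σ)⁻¹ * deriv (fun τ => (z τ α).im) σ

/-- `D²x^α = (1/L)·d/dσ((1/L)·dx^α/dσ)`. -/
def D2x {n : ℕ} (g : (Fin n → ℂ) → Matrix (Fin n) (Fin n) ℂ) (z : ℝ → Fin n → ℂ)
    (α : Fin n) (σ : ℝ) : ℝ :=
  (curveL g z σ)⁻¹ *
    deriv (fun τ => (curveL g z τ)⁻¹ * deriv (fun s => (z s α).re) τ) σ

/-- `D²t^α = (1/L)·d/dσ((1/L)·dt^α/dσ)`. -/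
def D2t {n : ℕ} (g : (Fin n → ℂ) → Matrix (Fin n) (Fin n) ℂ) (z : ℝ → Fin n → ℂ)
    (α : Fin n) (σ : ℝ) : ℝ :=
  (curveL g z σ)⁻¹ *
    deriv (fun τ => (curveL g z τ)⁻¹ * deriv (fun s => (z s α).im) τ) σ

/-- The complex geodesic equation (Theorem 1's equation) for the curve `z`. -/
def GeodesicEq {n : ℕ} (g : (Fin n → ℂ) → Matrix (Fin n) (Fin n) ℂ)
    (z : ℝ → Fin n → ℂ) : Prop :=
  ∀ (γ : Fin n) (σ : ℝ),
    ∑ μ, g (z σ) μ γ * D2z g z μ σ =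
      (∑ α, ∑ β, (dWbar γ (gF g α β) (z σ) - dWbar β (gF g α γ) (z σ)) *
          Dz g z α σ * (starRingEnd ℂ) (Dz g z β σ)) -
        ∑ α, ∑ β, dW α (gF g β γ) (z σ) * Dz g z α σ * Dz g z β σ

/-- The real part of the metric as a real matrix. -/
def gRmat {n : ℕ} (g : (Fin n → ℂ) → Matrix (Fin n) (Fin n) ℂ) (z : Fin n → ℂ) :
    Matrix (Fin n) (Fin n) ℝ :=
  Matrix.of fun i j => (g z i j).re

/-- The link tensor `ε^η_γ = Σ_ν g^I_{νγ̄} ((g^R)⁻¹)_{νη}`. -/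
def eps {n : ℕ} (g : (Fin n → ℂ) → Matrix (Fin n) (Fin n) ℂ) (z : Fin n → ℂ)
    (η γ : Fin n) : ℝ :=
  ∑ ν, (g z ν γ).im * (gRmat g z)⁻¹ ν η

/-- `Υ^{(1,1)}_{γαβ}`. -/
def Ups11 {n : ℕ} (g : (Fin n → ℂ) → Matrix (Fin n) (Fin n) ℂ) (γ α β : Fin n)
    (z : Fin n → ℂ) : ℂ :=
  PhiPP g γ α β z +
    ∑ η, (eps g z η γ : ℂ) * (PhiPM g η α β z + dT η (gR g α β) z / 2)

/-- `Υ^{(1,0)}_{γαβ}`. -/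
def Ups10 {n : ℕ} (g : (Fin n → ℂ) → Matrix (Fin n) (Fin n) ℂ) (γ α β : Fin n)
    (z : Fin n → ℂ) : ℂ :=
  Fx g α γ β z + dT α (gR g β γ) z +
    ∑ η, (eps g z η γ : ℂ) * (dX β (gR g α η) z - Ft g β η α z)

/-- `Υ^{(0,0)}_{γαβ}`. -/
def Ups00 {n : ℕ} (g : (Fin n → ℂ) → Matrix (Fin n) (Fin n) ℂ) (γ α β : Fin n)
    (z : Fin n → ℂ) : ℂ :=
  PhiMM g γ α β z - dX γ (gR g α β) z / 2 -
    ∑ η, (eps g z η γ : ℂ) * PhiMP g η α β z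

/-!
Take the real part of the `γ`-th complex geodesic equation and add `ε^η_γ` times the imaginary
part of the `η`-th one. On the left, `Σ_η ε^η_γ g^R_{μη̄} = g^I_{μγ̄}` (the defining property of
the link tensor) makes the `D²t` terms cancel. On the right, writing `Dz = Dx + i Dt` and
`∂g = ∂g^R + i ∂g^I`, the real and imaginary parts are quadratic forms in `(Dx, Dt)`; since
`g^R` is symmetric and `g^I` antisymmetric, their coefficients may be symmetrised in the two
summation indices, and the symmetrised coefficients are those of the `Υ` symbols.
-/

open scoped ComplexConjugate

theorem deriv_ofReal_comp (f : ℝ → ℝ) (t : ℝ) :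
    deriv (fun s => (f s : ℂ)) t = deriv f t := by
  by_cases hf : DifferentiableAt ℝ f t
  · exact hf.hasDerivAt.ofReal_comp.deriv
  · have hc : ¬ DifferentiableAt ℝ (fun s => (f s : ℂ)) t := fun h =>
      hf (by simpa [Function.comp_def] using reCLM.differentiableAt.comp t h)
    rw [deriv_zero_of_not_differentiableAt hf, deriv_zero_of_not_differentiableAt hc, ofReal_zero]

theorem conj_deriv_ofReal_comp (f : ℝ → ℝ) (t : ℝ) :
    conj (deriv (fun s => (f s : ℂ)) t) = deriv (fun s => (f s : ℂ)) t := by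
  rw [deriv_ofReal_comp, conj_ofReal]

theorem re_deriv {h : ℝ → ℂ} {t : ℝ} (hh : DifferentiableAt ℝ h t) :
    (deriv h t).re = deriv (fun s => (h s).re) t :=
  ((reCLM.hasFDerivAt.comp_hasDerivAt t hh.hasDerivAt).deriv).symm

theorem im_deriv {h : ℝ → ℂ} {t : ℝ} (hh : DifferentiableAt ℝ h t) :
    (deriv h t).im = deriv (fun s => (h s).im) t :=
  ((imCLM.hasFDerivAt.comp_hasDerivAt t hh.hasDerivAt).deriv).symm

theorem deriv_eq_deriv_re_add_I_mul_deriv_im {h : ℝ → ℂ} {t : ℝ}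
    (hh : DifferentiableAt ℝ h t) :
    deriv h t = deriv (fun s => ((h s).re : ℂ)) t + I * deriv (fun s => ((h s).im : ℂ)) t := by
  rw [deriv_ofReal_comp, deriv_ofReal_comp, ← re_deriv hh, ← im_deriv hh, mul_comm, re_add_im]

theorem ofReal_re_add_I_mul {a b : ℂ} (ha : conj a = a) (hb : conj b = b) :
    ((a + I * b).re : ℂ) = a := by
  simp [conj_eq_iff_im.mp hb, conj_eq_iff_re.mp ha]

theorem ofReal_im_add_I_mul {a b : ℂ} (ha : conj a = a) (hb : conj b = b) :
    ((a + I * b).im : ℂ) = b := by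
  simp [conj_eq_iff_im.mp ha, conj_eq_iff_re.mp hb]

theorem Finset.sum_sum_eq_of_add_swap {ι M : Type*} [Fintype ι] [AddCommMonoid M]
    [IsAddTorsionFree M] {f h : ι → ι → M} (hfh : ∀ a b, f a b + f b a = h a b + h b a) :
    ∑ a, ∑ b, f a b = ∑ a, ∑ b, h a b := by
  have hsymm (k : ι → ι → M) : 2 • ∑ a, ∑ b, k a b = ∑ a, ∑ b, (k a b + k b a) := by
    rw [two_nsmul]
    nth_rw 2 [Finset.sum_comm]
    simp only [Finset.sum_add_distrib]
  refine nsmul_right_injective two_ne_zero ?_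
  simp only [hsymm, hfh]

theorem sum_sum_sum_mul_mul_mul {ι κ R : Type*} [Fintype ι] [Fintype κ] [CommSemiring R]
    (B : κ → ι → ι → R) (e : κ → R) (x y : ι → R) :
    ∑ a, ∑ b, (∑ k, e k * B k a b) * x a * y b =
      ∑ k, e k * ∑ a, ∑ b, B k a b * x a * y b := by
  simp only [Finset.sum_mul, Finset.mul_sum, mul_assoc]
  conv_rhs => rw [Finset.sum_comm]
  exact Finset.sum_congr rfl fun a _ => Finset.sum_comm

section MetricDerivatives

variable {n : ℕ} {g : (Fin n → ℂ) → Matrix (Fin n) (Fin n) ℂ} {c a b : Fin n}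
  {w : Fin n → ℂ}

@[simp] theorem conj_dX_gR : conj (dX c (gR g a b) w) = dX c (gR g a b) w :=
  conj_deriv_ofReal_comp _ _

@[simp] theorem conj_dX_gI : conj (dX c (gI g a b) w) = dX c (gI g a b) w :=
  conj_deriv_ofReal_comp _ _

@[simp] theorem conj_dT_gR : conj (dT c (gR g a b) w) = dT c (gR g a b) w :=
  conj_deriv_ofReal_comp _ _

@[simp] theorem conj_dT_gI : conj (dT c (gI g a b) w) = dT c (gI g a b) w :=
  conj_deriv_ofReal_comp _ _

theorem dX_gF (hg : MetricC1 g) :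
    dX c (gF g a b) w = dX c (gR g a b) w + I * dX c (gI g a b) w := by
  refine deriv_eq_deriv_re_add_I_mul_deriv_im ?_
  refine ((hg a b).differentiable one_ne_zero _).comp 0 (differentiableAt_pi.2 fun i => ?_)
  fun_prop

theorem dT_gF (hg : MetricC1 g) :
    dT c (gF g a b) w = dT c (gR g a b) w + I * dT c (gI g a b) w := by
  refine deriv_eq_deriv_re_add_I_mul_deriv_im ?_
  refine ((hg a b).differentiable one_ne_zero _).comp 0 (differentiableAt_pi.2 fun i => ?_)
  fun_prop

theorem gR_comm (hherm : IsHermitianMetric g) : gR g a b = gR g b a := by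
  funext w
  simp only [gR, hherm w a b, conj_re]

theorem gI_anticomm (hherm : IsHermitianMetric g) : gI g a b = fun w => -gI g b a w := by
  funext w
  simp only [gI, hherm w a b, conj_im, ofReal_neg]

theorem dX_gI_anticomm (hherm : IsHermitianMetric g) :
    dX c (gI g a b) w = -dX c (gI g b a) w := by
  rw [dX, gI_anticomm hherm, deriv.fun_neg]
  rfl

theorem dT_gI_anticomm (hherm : IsHermitianMetric g) :
    dT c (gI g a b) w = -dT c (gI g b a) w := by
  rw [dT, gI_anticomm hherm, deriv.fun_neg]
  rfl

end MetricDerivatives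

section Curve

variable {n : ℕ} {g : (Fin n → ℂ) → Matrix (Fin n) (Fin n) ℂ} {z : ℝ → Fin n → ℂ}

theorem contDiff_coord (hz : ContDiff ℝ 2 z) (α : Fin n) : ContDiff ℝ 2 fun τ => z τ α :=
  (contDiff_apply ℝ ℂ α).comp hz

theorem re_Dz (hz : ContDiff ℝ 2 z) (α : Fin n) (σ : ℝ) :
    (Dz g z α σ).re = Dx g z α σ := by
  rw [Dz, ← ofReal_inv, re_ofReal_mul,
    re_deriv ((contDiff_coord hz α).differentiable two_ne_zero σ), Dx]

theorem im_Dz (hz : ContDiff ℝ 2 z) (α : Fin n) (σ : ℝ) :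
    (Dz g z α σ).im = Dt g z α σ := by
  rw [Dz, ← ofReal_inv, im_ofReal_mul,
    im_deriv ((contDiff_coord hz α).differentiable two_ne_zero σ), Dt]

theorem differentiable_curveL (hg : MetricC1 g) (hz : ContDiff ℝ 2 z)
    (hL : ∀ σ, 0 < curveL g z σ) : Differentiable ℝ (curveL g z) := by
  intro σ
  have hQ : DifferentiableAt ℝ (fun τ =>
      (∑ α, ∑ β, g (z τ) α β * deriv (fun s => z s α) τ * conj (deriv (fun s => z s β) τ)).re)
      σ := by
    have hg' : ∀ α β, DifferentiableAt ℝ (fun τ => g (z τ) α β) σ := fun α β =>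
      ((hg α β).differentiable one_ne_zero (z σ)).comp σ (hz.differentiable two_ne_zero σ)
    have hz' := fun α => (contDiff_coord hz α).differentiable_deriv_two σ
    exact reCLM.differentiableAt.comp σ <| .fun_sum fun α _ => .fun_sum fun β _ =>
      ((hg' α β).mul (hz' α)).mul (hz' β).star
  exact hQ.sqrt (Real.sqrt_pos.mp (hL σ)).ne'

theorem re_D2z (hg : MetricC1 g) (hz : ContDiff ℝ 2 z) (hL : ∀ σ, 0 < curveL g z σ)
    (α : Fin n) (σ : ℝ) : (D2z g z α σ).re = D2x g z α σ := by
  have hDz : DifferentiableAt ℝ (fun τ => Dz g z α τ) σ := by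
    have hinv : DifferentiableAt ℝ (fun τ => (curveL g z τ : ℂ)⁻¹) σ := by
      simpa using ((differentiable_curveL hg hz hL σ).inv (hL σ).ne').hasDerivAt.ofReal_comp
        |>.differentiableAt
    exact hinv.mul ((contDiff_coord hz α).differentiable_deriv_two σ)
  rw [D2z, ← ofReal_inv, re_ofReal_mul]
  change _ * (deriv (fun τ => Dz g z α τ) σ).re = _
  simp only [re_deriv hDz, re_Dz hz, D2x, Dx]

end Curve

section Link

open Matrix

variable {n : ℕ} {g : (Fin n → ℂ) → Matrix (Fin n) (Fin n) ℂ}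

theorem gRmat_symm (hherm : IsHermitianMetric g) (w : Fin n → ℂ) (i j : Fin n) :
    gRmat g w i j = gRmat g w j i := by
  simp only [gRmat, of_apply, hherm w i j, conj_re]

theorem gRmat_posDef (hherm : IsHermitianMetric g) (hpos : ∀ w, (g w).PosDef)
    (w : Fin n → ℂ) : (gRmat g w).PosDef := by
  refine .of_dotProduct_mulVec_pos (IsHermitian.ext fun i j => gRmat_symm hherm w j i)
    fun x hx => ?_
  have hx' : (fun i => (x i : ℂ)) ≠ 0 := fun h =>
    hx (funext fun i => by simpa using congrFun h i)
  have hquad : star x ⬝ᵥ (gRmat g w *ᵥ x) =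
      (star (fun i => (x i : ℂ)) ⬝ᵥ (g w *ᵥ fun i => (x i : ℂ))).re := by
    simp [dotProduct, mulVec, re_sum, Finset.mul_sum, gRmat, mul_left_comm]
  rw [hquad]
  exact (RCLike.pos_iff.mp ((hpos w).dotProduct_mulVec_pos hx')).1

theorem sum_eps_mul_re (hherm : IsHermitianMetric g) (hpos : ∀ w, (g w).PosDef)
    (w : Fin n → ℂ) (μ γ : Fin n) :
    ∑ η, eps g w η γ * (g w μ η).re = (g w μ γ).im := by
  set M := gRmat g w
  have hM : M⁻¹ * M = 1 :=
    M.nonsing_inv_mul (M.isUnit_iff_isUnit_det.mp (gRmat_posDef hherm hpos w).isUnit)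
  calc ∑ η, eps g w η γ * (g w μ η).re
      = ∑ ν, (g w ν γ).im * (M⁻¹ * M) ν μ := by
        simp only [eps, mul_apply, Finset.sum_mul, Finset.mul_sum]
        rw [Finset.sum_comm]
        refine Finset.sum_congr rfl fun ν _ => Finset.sum_congr rfl fun η _ => ?_
        rw [show (g w μ η).re = M η μ from gRmat_symm hherm w μ η]
        ring
    _ = (g w μ γ).im := by simp [hM, one_apply]

theorem sum_gR_add_eps_mul_gI_mul_re (hherm : IsHermitianMetric g) (hpos : ∀ w, (g w).PosDef)
    (w : Fin n → ℂ) (γ : Fin n) (ζ : Fin n → ℂ) :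
    ∑ μ, (gR g μ γ w + ∑ η, (eps g w η γ : ℂ) * gI g μ η w) * ((ζ μ).re : ℂ) =
      ((∑ μ, g w μ γ * ζ μ).re : ℂ) +
        ∑ η, (eps g w η γ : ℂ) * ((∑ μ, g w μ η * ζ μ).im : ℂ) := by
  have key : ∑ μ, ((g w μ γ).re + ∑ η, eps g w η γ * (g w μ η).im) * (ζ μ).re =
      ∑ μ, ((g w μ γ).re * (ζ μ).re - (g w μ γ).im * (ζ μ).im) +
        ∑ η, eps g w η γ *
          ∑ μ, ((g w μ η).re * (ζ μ).im + (g w μ η).im * (ζ μ).re) := by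
    simp only [Finset.mul_sum]
    rw [Finset.sum_comm (f := fun η μ => _), ← Finset.sum_add_distrib]
    refine Finset.sum_congr rfl fun μ _ => ?_
    simp only [mul_add, Finset.sum_add_distrib, ← mul_assoc, ← Finset.sum_mul,
      sum_eps_mul_re hherm hpos]
    ring
  simp only [re_sum, im_sum, mul_re, mul_im, gR, gI]
  exact_mod_cast key

end Link

section GeodesicRHS

variable {n : ℕ} (g : (Fin n → ℂ) → Matrix (Fin n) (Fin n) ℂ) (w : Fin n → ℂ)

def geodesicRHS (ζ : Fin n → ℂ) (γ : Fin n) : ℂ :=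
  (∑ α, ∑ β, (dWbar γ (gF g α β) w - dWbar β (gF g α γ) w) * ζ α * conj (ζ β)) -
    ∑ α, ∑ β, dW α (gF g β γ) w * ζ α * ζ β

def geodesicRe (u v : Fin n → ℝ) (γ : Fin n) : ℂ :=
  (∑ α, ∑ β, PhiPP g γ α β w * u α * u β) -
    (∑ α, ∑ β, (Fx g α γ β w + dT α (gR g β γ) w) * v α * u β) -
    ∑ α, ∑ β, (PhiMM g γ α β w - dX γ (gR g α β) w / 2) * v α * v β

def geodesicIm (u v : Fin n → ℝ) (γ : Fin n) : ℂ :=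
  (∑ α, ∑ β, (PhiPM g γ α β w + dT γ (gR g α β) w / 2) * u α * u β) -
    (∑ α, ∑ β, (dX β (gR g α γ) w - Ft g β γ α w) * v α * u β) +
    ∑ α, ∑ β, PhiMP g γ α β w * v α * v β

variable {g w}

theorem geodesicRHS_eq (hg : MetricC1 g) (hherm : IsHermitianMetric g) (ζ : Fin n → ℂ)
    (γ : Fin n) :
    geodesicRHS g w ζ γ = geodesicRe g w (fun α => (ζ α).re) (fun α => (ζ α).im) γ +
      I * geodesicIm g w (fun α => (ζ α).re) (fun α => (ζ α).im) γ := by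
  simp only [geodesicRHS, geodesicRe, geodesicIm, Finset.mul_sum, ← Finset.sum_sub_distrib,
    ← Finset.sum_add_distrib]
  refine Finset.sum_sum_eq_of_add_swap fun a b => ?_
  simp only [dWbar, dW, dX_gF hg, dT_gF hg, PhiPP, PhiPM, PhiMP, PhiMM, Fx, Ft,
    gR_comm hherm (a := b) (b := a), dX_gI_anticomm hherm (a := b) (b := a),
    dT_gI_anticomm hherm (a := b) (b := a)]
  conv_lhs => rw [← re_add_im (ζ a), ← re_add_im (ζ b)]
  simp only [map_add, map_mul, conj_ofReal, conj_I]
  ring_nf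
  simp only [I_sq, I_pow_three, I_pow_four]
  ring

theorem conj_geodesicRe (u v : Fin n → ℝ) (γ : Fin n) :
    conj (geodesicRe g w u v γ) = geodesicRe g w u v γ := by
  simp [geodesicRe, PhiPP, PhiMM, Fx, map_sum, map_ofNat]

theorem conj_geodesicIm (u v : Fin n → ℝ) (γ : Fin n) :
    conj (geodesicIm g w u v γ) = geodesicIm g w u v γ := by
  simp [geodesicIm, PhiPM, PhiMP, Ft, map_sum, map_ofNat]

theorem ofReal_re_geodesicRHS (hg : MetricC1 g) (hherm : IsHermitianMetric g)
    (ζ : Fin n → ℂ) (γ : Fin n) :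
    ((geodesicRHS g w ζ γ).re : ℂ) =
      geodesicRe g w (fun α => (ζ α).re) (fun α => (ζ α).im) γ := by
  rw [geodesicRHS_eq hg hherm, ofReal_re_add_I_mul (conj_geodesicRe ..) (conj_geodesicIm ..)]

theorem ofReal_im_geodesicRHS (hg : MetricC1 g) (hherm : IsHermitianMetric g)
    (ζ : Fin n → ℂ) (γ : Fin n) :
    ((geodesicRHS g w ζ γ).im : ℂ) =
      geodesicIm g w (fun α => (ζ α).re) (fun α => (ζ α).im) γ := by
  rw [geodesicRHS_eq hg hherm, ofReal_im_add_I_mul (conj_geodesicRe ..) (conj_geodesicIm ..)]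

theorem sum_Ups_eq (u v : Fin n → ℝ) (γ : Fin n) :
    (∑ α, ∑ β, Ups11 g γ α β w * (u α : ℂ) * (u β : ℂ)) -
        (∑ α, ∑ β, Ups10 g γ α β w * (v α : ℂ) * (u β : ℂ)) -
        ∑ α, ∑ β, Ups00 g γ α β w * (v α : ℂ) * (v β : ℂ) =
      geodesicRe g w u v γ + ∑ η, (eps g w η γ : ℂ) * geodesicIm g w u v η := by
  simp only [Ups11, Ups10, Ups00, geodesicRe, geodesicIm, add_mul, sub_mul,
    Finset.sum_add_distrib, Finset.sum_sub_distrib, mul_add, mul_sub, sum_sum_sum_mul_mul_mul]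
  ring

end GeodesicRHS

/-- Theorem 2: the real projective geodesic equation. -/
theorem real_projective_geodesic {n : ℕ}
    (g : (Fin n → ℂ) → Matrix (Fin n) (Fin n) ℂ)
    (hg : MetricC1 g) (hherm : IsHermitianMetric g)
    (hpos : ∀ w, (g w).PosDef)
    (z : ℝ → Fin n → ℂ) (hz : ContDiff ℝ 2 z)
    (hL : ∀ σ, 0 < curveL g z σ) (hgeo : GeodesicEq g z)
    (γ : Fin n) (σ : ℝ) :
    ∑ μ, (gR g μ γ (z σ) + ∑ η, (eps g (z σ) η γ : ℂ) * gI g μ η (z σ)) *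
        (D2x g z μ σ : ℂ) =
      (∑ α, ∑ β, Ups11 g γ α β (z σ) * (Dx g z α σ : ℂ) * (Dx g z β σ : ℂ)) -
        (∑ α, ∑ β, Ups10 g γ α β (z σ) * (Dt g z α σ : ℂ) * (Dx g z β σ : ℂ)) -
        ∑ α, ∑ β, Ups00 g γ α β (z σ) * (Dt g z α σ : ℂ) * (Dt g z β σ : ℂ) := by
  have hgeo' (c : Fin n) : ∑ μ, g (z σ) μ c * D2z g z μ σ =
      geodesicRHS g (z σ) (fun α => Dz g z α σ) c := hgeo c σ
  calc _ = ∑ μ, (gR g μ γ (z σ) + ∑ η, (eps g (z σ) η γ : ℂ) * gI g μ η (z σ)) *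
        ((D2z g z μ σ).re : ℂ) := by simp only [re_D2z hg hz hL]
    _ = ((geodesicRHS g (z σ) (fun α => Dz g z α σ) γ).re : ℂ) +
        ∑ η, (eps g (z σ) η γ : ℂ) * ((geodesicRHS g (z σ) (fun α => Dz g z α σ) η).im : ℂ) := by
      simp only [sum_gR_add_eps_mul_gI_mul_re hherm hpos, hgeo']
    _ = geodesicRe g (z σ) (Dx g z · σ) (Dt g z · σ) γ +
        ∑ η, (eps g (z σ) η γ : ℂ) * geodesicIm g (z σ) (Dx g z · σ) (Dt g z · σ) η := by
      simp only [ofReal_re_geodesicRHS hg hherm, ofReal_im_geodesicRHS hg hherm, re_Dz hz,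
        im_Dz hz]
    _ = _ := (sum_Ups_eq ..).symm
end
end

section
/- (Corollary 2: emergence of the Lorentz field along a root geodesic.) Let n = 4 and let g = g^R + i·g^I be a pointwise-hermitian, positive-definite C¹ metric on ℂ⁴ with ∂^x_1 g_{αβ̄} ≡ 0 and ∂^t_γ g_{αβ̄} ≡ 0 for γ ∈ {2,3,4} and all α, β. Let z = x + it : ℝ → ℂ⁴ be a C² curve with L(σ) > 0 satisfying the complex geodesic equation, and suppose that along the curve: g^I(z(σ)) = 0 for every σ (equivalently the link tensor ε vanishes along the curve, while derivatives of g^I may be nonzero), Dt¹ = 1, Dt^γ = 0 for γ ∈ {2,3,4}, and Dx¹ = 0. Then for every γ ∈ {2,3,4} and every σ: Σ_μ g^R_{μγ̄}(z) D²x^μ = [Σ_{α,β} Φ^{γ++}_{αβ} Dx^α Dx^β − Σ_β ∂^t_1 g^R_{βγ̄} Dx^β + ½·∂^x_γ g^R_{11̄}] + [− Σ_β F^x_{1γβ} Dx^β − Φ^{γ--}_{11}], all coefficient functions evaluated at z(σ); the first bracket is the gravitational contribution and the second bracket is the Lorentz field contribution with magnetic tensor F^x and electric part Φ^{γ--}_{11}.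 -/
open Complex
open scoped ComplexOrder

noncomputable section

/-!
Along the curve the unit velocity is `Dz = Dx + i e₁` with `Dx¹ = 0`, and `g` is real there, so
the real part of the left side of the complex geodesic equation is `Σ_μ g^R_{μγ̄} D²x^μ`. On the
right side only the derivatives `∂^x_β` (`β ≠ 1`) and `∂^t_1` survive. Splitting the double sums at
the index `1`, the purely spatial terms give `Φ^{γ++}`; the mixed terms `(1, b)` and `(b, 1)`
combine, because hermiticity makes `Im ∂^x_γ g_{b1̄} = - Im ∂^x_γ g_{1b̄}`, into the magnetic term
`F^x_{1γb}` and `∂^t_1 g^R_{bγ̄}`; and the `(1, 1)` term gives `½ ∂^x_γ g^R_{11̄} - Φ^{γ--}_{11}`.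
-/

open scoped ComplexConjugate

theorem HasDerivAt.re_comp {F : ℝ → ℂ} {F' : ℂ} {s : ℝ} (h : HasDerivAt F F' s) :
    HasDerivAt (fun r => (F r).re) F'.re s :=
  reCLM.hasFDerivAt.comp_hasDerivAt s h

theorem HasDerivAt.im_comp {F : ℝ → ℂ} {F' : ℂ} {s : ℝ} (h : HasDerivAt F F' s) :
    HasDerivAt (fun r => (F r).im) F'.im s :=
  imCLM.hasFDerivAt.comp_hasDerivAt s h

section PartialDerivatives

variable {n : ℕ} {f : (Fin n → ℂ) → ℂ}

theorem differentiableAt_dX_line (hf : Differentiable ℝ f) (α : Fin n) (w : Fin n → ℂ) :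
    DifferentiableAt ℝ (fun s : ℝ => f (fun i => w i + (s : ℂ) * eV n α i)) 0 := by
  fun_prop

theorem differentiableAt_dT_line (hf : Differentiable ℝ f) (α : Fin n) (w : Fin n → ℂ) :
    DifferentiableAt ℝ (fun s : ℝ => f (fun i => w i + (s : ℂ) * I * eV n α i)) 0 := by
  fun_prop

variable {g : (Fin n → ℂ) → Matrix (Fin n) (Fin n) ℂ} {i j : Fin n}

theorem dX_gR (hf : Differentiable ℝ (gF g i j)) (α : Fin n) (w : Fin n → ℂ) :
    dX α (gR g i j) w = (dX α (gF g i j) w).re :=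
  ((differentiableAt_dX_line hf α w).hasDerivAt.re_comp.ofReal_comp).deriv

theorem dX_gI (hf : Differentiable ℝ (gF g i j)) (α : Fin n) (w : Fin n → ℂ) :
    dX α (gI g i j) w = (dX α (gF g i j) w).im :=
  ((differentiableAt_dX_line hf α w).hasDerivAt.im_comp.ofReal_comp).deriv

theorem dT_gR (hf : Differentiable ℝ (gF g i j)) (α : Fin n) (w : Fin n → ℂ) :
    dT α (gR g i j) w = (dT α (gF g i j) w).re :=
  ((differentiableAt_dT_line hf α w).hasDerivAt.re_comp.ofReal_comp).deriv

theorem dT_gI (hf : Differentiable ℝ (gF g i j)) (α : Fin n) (w : Fin n → ℂ) :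
    dT α (gI g i j) w = (dT α (gF g i j) w).im :=
  ((differentiableAt_dT_line hf α w).hasDerivAt.im_comp.ofReal_comp).deriv

theorem IsHermitianMetric.dX_gF_swap (hherm : IsHermitianMetric g) (α : Fin n) (w : Fin n → ℂ) :
    dX α (gF g j i) w = conj (dX α (gF g i j) w) := by
  have : gF g j i = fun v => star (gF g i j v) := funext fun v => hherm v j i
  rw [this]
  exact deriv.star

end PartialDerivatives

section Curves

variable {n : ℕ} {g : (Fin n → ℂ) → Matrix (Fin n) (Fin n) ℂ} {z : ℝ → Fin n → ℂ} {σ : ℝ}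

theorem differentiableAt_curveL (hg : ∀ i j, Differentiable ℝ (gF g i j))
    (hz : ContDiff ℝ 2 z) (hL : curveL g z σ ≠ 0) : DifferentiableAt ℝ (curveL g z) σ := by
  have hg' : ∀ i j, Differentiable ℝ fun w => g w i j := hg
  have hz1 : Differentiable ℝ z := hz.differentiable (by norm_num)
  have hz' : ∀ α, Differentiable ℝ (deriv fun τ => z τ α) := fun α =>
    (contDiff_pi.1 hz α).differentiable_deriv_two
  refine DifferentiableAt.sqrt (reCLM.differentiableAt.comp σ ?_) fun h => hL ?_
  · fun_prop
  · simp only [curveL, Lag] at h ⊢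
    rw [h, Real.sqrt_zero]

theorem deriv_re_coord (hz : Differentiable ℝ z) (α : Fin n) (τ : ℝ) :
    deriv (fun s => (z s α).re) τ = (deriv (fun s => z s α) τ).re :=
  (differentiableAt_pi.1 (hz τ) α).hasDerivAt.re_comp.deriv

theorem deriv_im_coord (hz : Differentiable ℝ z) (α : Fin n) (τ : ℝ) :
    deriv (fun s => (z s α).im) τ = (deriv (fun s => z s α) τ).im :=
  (differentiableAt_pi.1 (hz τ) α).hasDerivAt.im_comp.deriv

theorem Dz_eq_Dx_add_Dt_mul_I (hz : Differentiable ℝ z) (α : Fin n) :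
    Dz g z α σ = Dx g z α σ + Dt g z α σ * I := by
  rw [Dz, Dx, Dt, deriv_re_coord hz, deriv_im_coord hz]
  conv_lhs => rw [← re_add_im (deriv (fun τ => z τ α) σ)]
  push_cast
  ring

theorem D2x_eq_re_D2z (hz : ContDiff ℝ 2 z) (hLd : DifferentiableAt ℝ (curveL g z) σ)
    (hL : curveL g z σ ≠ 0) (α : Fin n) : D2x g z α σ = (D2z g z α σ).re := by
  have hz1 : Differentiable ℝ z := hz.differentiable (by norm_num)
  have hz' : Differentiable ℝ (deriv fun τ => z τ α) :=
    (contDiff_pi.1 hz α).differentiable_deriv_two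
  have hre : (fun τ => (curveL g z τ)⁻¹ * deriv (fun s => (z s α).re) τ) =
      fun τ => (((curveL g z τ : ℂ))⁻¹ * deriv (fun s => z s α) τ).re := by
    funext τ
    rw [deriv_re_coord hz1, ← ofReal_inv, re_ofReal_mul]
  have hd : DifferentiableAt ℝ (fun τ => ((curveL g z τ : ℂ))⁻¹ * deriv (fun s => z s α) τ) σ :=
    (hLd.hasDerivAt.ofReal_comp.differentiableAt.inv (ofReal_ne_zero.2 hL)).mul (hz' σ)
  rw [D2x, D2z, hre, hd.hasDerivAt.re_comp.deriv, ← ofReal_inv, re_ofReal_mul]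

end Curves

section GeodesicForce

variable {n : ℕ} (g : (Fin n → ℂ) → Matrix (Fin n) (Fin n) ℂ) (w v : Fin n → ℂ) (γ : Fin n)

def geodesicForceTerm (α β : Fin n) : ℂ :=
  (dWbar γ (gF g α β) w - dWbar β (gF g α γ) w) * v α * conj (v β) -
    dW α (gF g β γ) w * v α * v β

def geodesicForce : ℂ := ∑ α, ∑ β, geodesicForceTerm g w v γ α β

variable {g}

theorem GeodesicEq.eq_geodesicForce {z : ℝ → Fin n → ℂ} (h : GeodesicEq g z) (γ : Fin n) (σ : ℝ) :
    ∑ μ, g (z σ) μ γ * D2z g z μ σ = geodesicForce g (z σ) (fun α => Dz g z α σ) γ := by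
  simp only [h γ σ, geodesicForce, geodesicForceTerm, Finset.sum_sub_distrib]

end GeodesicForce

theorem Fin.sum_sum_succ_succ {n : ℕ} {M : Type*} [AddCommMonoid M]
    (f : Fin (n + 1) → Fin (n + 1) → M) :
    ∑ α, ∑ β, f α β =
      f 0 0 + ∑ b : Fin n, (f 0 b.succ + f b.succ 0) +
        ∑ a : Fin n, ∑ b : Fin n, f a.succ b.succ := by
  simp only [Fin.sum_univ_succ, Finset.sum_add_distrib]
  abel

section Root

variable {n : ℕ} {g : (Fin (n + 1) → ℂ) → Matrix (Fin (n + 1)) (Fin (n + 1)) ℂ}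
  {w : Fin (n + 1) → ℂ} {x : Fin (n + 1) → ℝ} {v : Fin (n + 1) → ℂ} {γ : Fin (n + 1)}

theorem re_geodesicForce_of_root (hherm : IsHermitianMetric g)
    (hX0 : ∀ α β, dX 0 (gF g α β) w = 0) (hT : ∀ k ≠ 0, ∀ α β, dT k (gF g α β) w = 0)
    (hx0 : x 0 = 0) (hv0 : v 0 = I) (hv : ∀ b ≠ 0, v b = x b) (hγ : γ ≠ 0) :
    (geodesicForce g w v γ).re =
      ∑ α, ∑ β, ((dX γ (gF g α β) w).re - (dX α (gF g β γ) w).re - (dX β (gF g α γ) w).re) / 2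
        * x α * x β
      - ∑ β, (dT 0 (gF g β γ) w).re * x β + (dX γ (gF g 0 0) w).re / 2
      - ∑ β, ((dX γ (gF g 0 β) w).im - (dX β (gF g 0 γ) w).im) * x β
      + (dT 0 (gF g 0 γ) w).im := by
  have htγ := hT γ hγ
  have hvs : ∀ b : Fin n, v b.succ = x b.succ := fun b => hv _ (Fin.succ_ne_zero b)
  have hts : ∀ b : Fin n, ∀ α β, dT b.succ (gF g α β) w = 0 := fun b => hT _ (Fin.succ_ne_zero b)
  have h00 : (geodesicForceTerm g w v γ 0 0).re =
      (dX γ (gF g 0 0) w).re / 2 + (dT 0 (gF g 0 γ) w).im := by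
    simp only [geodesicForceTerm, dWbar, htγ, mul_zero, add_zero, hX0, zero_add, hv0, conj_I,
      mul_neg, dW, zero_sub, sub_re, neg_re, mul_re, div_ofNat_re, I_re, zero_mul, I_im, one_mul, sub_im,
      div_ofNat_im, mul_im, mul_one, neg_sub, neg_neg, neg_im, sub_neg_eq_add]
    ring
  have hmixed : ∀ b : Fin n,
      (geodesicForceTerm g w v γ 0 b.succ).re + (geodesicForceTerm g w v γ b.succ 0).re =
        -(((dX γ (gF g 0 b.succ) w).im - (dX b.succ (gF g 0 γ) w).im) * x b.succ) -
          (dT 0 (gF g b.succ γ) w).re * x b.succ := by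
    intro b
    have hswap : (dX γ (gF g b.succ 0) w).im = -(dX γ (gF g 0 b.succ) w).im := by
      rw [hherm.dX_gF_swap, conj_im]
    simp only [geodesicForceTerm, dWbar, htγ, mul_zero, add_zero, hts, hv0, hvs, conj_ofReal, dW,
      hX0, zero_sub, sub_re, mul_re, div_ofNat_re, I_re, sub_im, div_ofNat_im, I_im, mul_one,
      neg_sub, ofReal_re, mul_im, ofReal_im, sub_zero, neg_re, zero_mul, one_mul, neg_neg, neg_im,
      zero_add, neg_mul, sub_neg_eq_add, conj_I, mul_neg, hswap]
    ring
  have hspace : ∀ a b : Fin n, (geodesicForceTerm g w v γ a.succ b.succ).re =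
      ((dX γ (gF g a.succ b.succ) w).re - (dX a.succ (gF g b.succ γ) w).re -
        (dX b.succ (gF g a.succ γ) w).re) / 2 * x a.succ * x b.succ := by
    intro a b
    simp only [geodesicForceTerm, dWbar, htγ, mul_zero, add_zero, hts, hvs, conj_ofReal, dW,
      sub_zero, sub_re, mul_re, div_ofNat_re, ofReal_re, sub_im, div_ofNat_im, ofReal_im, mul_im,
      zero_add]
    ring
  simp only [geodesicForce, re_sum]
  rw [Fin.sum_sum_succ_succ, Fin.sum_sum_succ_succ, Fin.sum_univ_succ, Fin.sum_univ_succ]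
  simp only [h00, hmixed, hspace, hx0, mul_zero, zero_mul, add_zero, zero_add,
    Finset.sum_const_zero, Finset.sum_sub_distrib, Finset.sum_neg_distrib]
  ring

end Root

/-- Indices `1,2,3,4` are rendered as `0,1,2,3 : Fin 4`, so the distinguished index `1` is `0`. -/
theorem lorentz_field_emergence_general
    (g : (Fin 4 → ℂ) → Matrix (Fin 4) (Fin 4) ℂ)
    (hg : MetricC1 g) (hherm : IsHermitianMetric g)
    (hx1 : ∀ (α β : Fin 4) (w : Fin 4 → ℂ), dX (0 : Fin 4) (gF g α β) w = 0)
    (ht : ∀ γ : Fin 4, γ ≠ 0 → ∀ (α β : Fin 4) (w : Fin 4 → ℂ), dT γ (gF g α β) w = 0)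
    (z : ℝ → Fin 4 → ℂ) (hz : ContDiff ℝ 2 z)
    (hL : ∀ σ, 0 < curveL g z σ) (hgeo : GeodesicEq g z)
    (hGI : ∀ (σ : ℝ) (i j : Fin 4), (g (z σ) i j).im = 0)
    (hDt1 : ∀ σ, Dt g z (0 : Fin 4) σ = 1)
    (hDt : ∀ γ : Fin 4, γ ≠ 0 → ∀ σ, Dt g z γ σ = 0)
    (hDx1 : ∀ σ, Dx g z (0 : Fin 4) σ = 0)
    (γ : Fin 4) (hγ : γ ≠ 0) (σ : ℝ) :
    ∑ μ, gR g μ γ (z σ) * (D2x g z μ σ : ℂ) =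
      ((∑ α, ∑ β, PhiPP g γ α β (z σ) * (Dx g z α σ : ℂ) * (Dx g z β σ : ℂ)) -
          (∑ β, dT (0 : Fin 4) (gR g β γ) (z σ) * (Dx g z β σ : ℂ)) +
          dX γ (gR g (0 : Fin 4) (0 : Fin 4)) (z σ) / 2) +
        ((- ∑ β, Fx g (0 : Fin 4) γ β (z σ) * (Dx g z β σ : ℂ)) -
          PhiMM g γ (0 : Fin 4) (0 : Fin 4) (z σ)) := by
  have hgd : ∀ i j, Differentiable ℝ (gF g i j) := fun i j => (hg i j).differentiable one_ne_zero
  have hz1 : Differentiable ℝ z := hz.differentiable (by norm_num)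
  have hLd := differentiableAt_curveL hgd hz (hL σ).ne'
  have hv0 : Dz g z 0 σ = I := by simp [Dz_eq_Dx_add_Dt_mul_I hz1, hDx1, hDt1]
  have hv : ∀ b ≠ 0, Dz g z b σ = Dx g z b σ := fun b hb => by
    simp [Dz_eq_Dx_add_Dt_mul_I hz1, hDt b hb]
  have hlhs : ∑ μ, gR g μ γ (z σ) * (D2x g z μ σ : ℂ) =
      ((∑ μ, g (z σ) μ γ * D2z g z μ σ).re : ℂ) := by
    simp [re_sum, gR, hGI, D2x_eq_re_D2z hz hLd (hL σ).ne']
  rw [hlhs, hgeo.eq_geodesicForce, re_geodesicForce_of_root hherm (fun α β => hx1 α β _)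
    (fun k hk α β => ht k hk α β _) (hDx1 σ) hv0 hv hγ]
  simp only [PhiPP, PhiMM, Fx, dX_gR (hgd _ _), dT_gR (hgd _ _), dX_gI (hgd _ _), dT_gI (hgd _ _),
    ht γ hγ, zero_im]
  push_cast
  ring

/-- Corollary 2: the Lorentz field along a root geodesic. Indices `1,2,3,4` are rendered as
`0,1,2,3 : Fin 4`, so the distinguished index `1` is `0`. Along a complex geodesic with
`g^I = 0` on the curve (so the link tensor vanishes there), `Dt¹ = 1`, `Dt² = Dt³ = Dt⁴ = 0`
and `Dx¹ = 0`, the projective geodesic acquires, besides the gravitational part, the Lorentz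
field contribution `− Σ_β F^x_{1γβ} Dx^β − Φ^{γ--}_{11}`. -/
theorem lorentz_field_emergence
    (g : (Fin 4 → ℂ) → Matrix (Fin 4) (Fin 4) ℂ)
    (hg : MetricC1 g) (hherm : IsHermitianMetric g)
    (hpos : ∀ w, (g w).PosDef)
    (hx1 : ∀ (α β : Fin 4) (w : Fin 4 → ℂ), dX (0 : Fin 4) (gF g α β) w = 0)
    (ht : ∀ γ : Fin 4, γ ≠ 0 → ∀ (α β : Fin 4) (w : Fin 4 → ℂ), dT γ (gF g α β) w = 0)
    (z : ℝ → Fin 4 → ℂ) (hz : ContDiff ℝ 2 z)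
    (hL : ∀ σ, 0 < curveL g z σ) (hgeo : GeodesicEq g z)
    (hGI : ∀ (σ : ℝ) (i j : Fin 4), (g (z σ) i j).im = 0)
    (hDt1 : ∀ σ, Dt g z (0 : Fin 4) σ = 1)
    (hDt : ∀ γ : Fin 4, γ ≠ 0 → ∀ σ, Dt g z γ σ = 0)
    (hDx1 : ∀ σ, Dx g z (0 : Fin 4) σ = 0)
    (γ : Fin 4) (hγ : γ ≠ 0) (σ : ℝ) :
    ∑ μ, gR g μ γ (z σ) * (D2x g z μ σ : ℂ) =
      ((∑ α, ∑ β, PhiPP g γ α β (z σ) * (Dx g z α σ : ℂ) * (Dx g z β σ : ℂ)) -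
          (∑ β, dT (0 : Fin 4) (gR g β γ) (z σ) * (Dx g z β σ : ℂ)) +
          dX γ (gR g (0 : Fin 4) (0 : Fin 4)) (z σ) / 2) +
        ((- ∑ β, Fx g (0 : Fin 4) γ β (z σ) * (Dx g z β σ : ℂ)) -
          PhiMM g γ (0 : Fin 4) (0 : Fin 4) (z σ)) :=
  lorentz_field_emergence_general g hg hherm hx1 ht z hz hL hgeo hGI hDt1 hDt hDx1 γ hγ σ
end
end
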